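/- arXiv:1411.0215 — 7 statements merged into one kernel-verified Lean document; each statement's English description precedes it below -/
import Mathlib

section
/- If a ∈ ℝ and u, t ∈ [-1,1], then there exists s ∈ ℝ with |s| ≤ (π/2)|t| such that sin(a + t·u) = sin(a) + s·sin(u). -/
theorem stmt_0 (a u t : ℝ) (hu : u ∈ Set.Icc (-1 : ℝ) 1) (ht : t ∈ Set.Icc (-1 : ℝ) 1) :
    ∃ s : ℝ, |s| ≤ (Real.pi / 2) * |t| ∧
      Real.sin (a + t * u) = Real.sin a + s * Real.sin u := by
  obtain ⟨hu1, hu2⟩ := hu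
  rcases eq_or_ne u 0 with rfl | hu0
  · exact ⟨0, by simp; positivity, by simp⟩
  · have hπ := Real.pi_gt_three
    have h1 : |u| ≤ 1 := abs_le.2 ⟨hu1, hu2⟩
    have hjordan := Real.mul_abs_le_abs_sin (x := u) (h1.trans (by linarith))
    have hsu : Real.sin u ≠ 0 := by
      have hpos : (0:ℝ) < 2/Real.pi * |u| := by positivity
      intro h; rw [h, abs_zero] at hjordan; linarith
    refine ⟨(Real.sin (a + t*u) - Real.sin a)/Real.sin u, ?_, by field_simp; ring⟩
    rw [abs_div, div_le_iff₀ (abs_pos.2 hsu)]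
    have key : |Real.sin (a+t*u) - Real.sin a| ≤ |t| * |u| := by
      rw [Real.sin_sub_sin]
      have h3 : |Real.sin ((a + t*u - a)/2)| ≤ |t*u|/2 := by
        have := Real.abs_sin_le_abs (x := (a + t*u - a)/2)
        calc |Real.sin ((a + t*u - a)/2)| ≤ |(a + t*u - a)/2| := this
          _ = |t*u|/2 := by rw [abs_div, abs_two]; ring
      have h4 : |Real.cos ((a + t*u + a)/2)| ≤ 1 := Real.abs_cos_le_one _
      calc |2 * Real.sin ((a + t*u - a)/2) * Real.cos ((a + t*u + a)/2)|
          = 2 * |Real.sin ((a + t*u - a)/2)| * |Real.cos ((a + t*u + a)/2)| := by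
            rw [abs_mul, abs_mul, abs_two]
        _ ≤ 2 * (|t*u|/2) * 1 := by
            apply mul_le_mul _ h4 (abs_nonneg _) (by positivity)
            exact mul_le_mul_of_nonneg_left h3 (by norm_num)
        _ = |t| * |u| := by rw [abs_mul]; ring
    calc |Real.sin (a+t*u) - Real.sin a| ≤ |t| * |u| := key
      _ ≤ Real.pi/2 * |t| * (2/Real.pi * |u|) := by
          rw [show Real.pi/2 * |t| * (2/Real.pi * |u|) = |t| * |u| * (Real.pi/2 * (2/Real.pi)) by ring,
            div_mul_div_comm]
          rw [show Real.pi * 2 / (2 * Real.pi) = 1 by field_simp]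
          simp
      _ ≤ Real.pi/2 * |t| * |Real.sin u| := by
          apply mul_le_mul_of_nonneg_left hjordan (by positivity)
end

section
/- Let X, Y be topological vector spaces over ℂ, let U be a balanced convex neighborhood of 0 in X, let V be a balanced convex subset of Y, and let f : X → Y satisfy: for all u ∈ U, w ∈ X and scalars t with |t| ≤ 1 there exist scalars with f(t·u + w) = s₁·f(u) + f(w) where |s₁| ≤ |t| (in particular f(t·u) = s₁ f(u) with |s₁| ≤ |t| taking w = 0, and f(0)=0). Then the set U ∩ f⁻¹(V) is balanced and convex, i.e., for u, w ∈ U ∩ f⁻¹(V) and scalars α, β with |α| + |β| ≤ 1, one has α·u + β·w ∈ U ∩ f⁻¹(V). -/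
lemma balconv_mem {Y : Type*} [AddCommGroup Y] [Module ℂ Y] [Module ℝ Y]
    [IsScalarTower ℝ ℂ Y] {A : Set Y} (hbal : Balanced ℂ A) (hconv : Convex ℝ A)
    {a b : Y} (ha : a ∈ A) (hb : b ∈ A) {α β : ℂ} (h : ‖α‖ + ‖β‖ ≤ 1) :
    α • a + β • b ∈ A := by
  have h0 : (0 : Y) ∈ A := by
    simpa using hbal.smul_mem (a := 0) (by simp) ha
  set r := ‖α‖ with hr
  set s := ‖β‖ with hs
  have hrn : 0 ≤ r := norm_nonneg _
  have hsn : 0 ≤ s := norm_nonneg _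
  by_cases hσ : r + s = 0
  · have hα : α = 0 := norm_eq_zero.mp (by linarith)
    have hβ : β = 0 := norm_eq_zero.mp (by linarith)
    simpa [hα, hβ] using h0
  · have hσpos : 0 < r + s := lt_of_le_of_ne (by positivity) (Ne.symm hσ)
    set cα : ℂ := if r = 0 then 0 else α / r with hcα
    set cβ : ℂ := if s = 0 then 0 else β / s with hcβ
    have hαc : α = (r : ℂ) * cα := by
      by_cases h' : r = 0
      · simp [hcα, h', norm_eq_zero.mp (hr ▸ h' : ‖α‖ = 0)]
      · have : (r : ℂ) ≠ 0 := by exact_mod_cast h'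
        rw [hcα, if_neg h']
        field_simp
    have hβc : β = (s : ℂ) * cβ := by
      by_cases h' : s = 0
      · simp [hcβ, h', norm_eq_zero.mp (hs ▸ h' : ‖β‖ = 0)]
      · have : (s : ℂ) ≠ 0 := by exact_mod_cast h'
        rw [hcβ, if_neg h']
        field_simp
    have hcαn : ‖cα‖ ≤ 1 := by
      by_cases h' : r = 0
      · simp [hcα, h']
      · simp only [hcα, if_neg h', norm_div, Complex.norm_real, Real.norm_eq_abs,
          abs_of_nonneg hrn, ← hr]
        rw [div_self h']
    have hcβn : ‖cβ‖ ≤ 1 := by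
      by_cases h' : s = 0
      · simp [hcβ, h']
      · simp only [hcβ, if_neg h', norm_div, Complex.norm_real, Real.norm_eq_abs,
          abs_of_nonneg hsn, ← hs]
        rw [div_self h']
    have hpa : cα • a ∈ A := hbal.smul_mem hcαn ha
    have hpb : cβ • b ∈ A := hbal.smul_mem hcβn hb
    have hm : (r / (r + s)) • (cα • a) + (s / (r + s)) • (cβ • b) ∈ A :=
      hconv hpa hpb (by positivity) (by positivity) (by field_simp)
    have hz : (r + s) • ((r / (r + s)) • (cα • a) + (s / (r + s)) • (cβ • b))
        + (1 - (r + s)) • (0 : Y) ∈ A :=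
      hconv hm h0 (le_of_lt hσpos) (by linarith) (by ring)
    have key : (r + s) • ((r / (r + s)) • (cα • a) + (s / (r + s)) • (cβ • b))
        + (1 - (r + s)) • (0 : Y) = α • a + β • b := by
      rw [smul_zero, add_zero, smul_add, smul_smul, smul_smul,
        mul_div_cancel₀ r hσ, mul_div_cancel₀ s hσ]
      rw [hαc, hβc]
      rw [show ((r : ℂ) * cα) • a = r • (cα • a) by
        rw [← Complex.real_smul, smul_assoc]]
      rw [show ((s : ℂ) * cβ) • b = s • (cβ • b) by
        rw [← Complex.real_smul, smul_assoc]]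
    rwa [key] at hz

theorem stmt_1 {X Y : Type*} [AddCommGroup X] [Module ℂ X] [Module ℝ X]
    [IsScalarTower ℝ ℂ X] [TopologicalSpace X]
    [AddCommGroup Y] [Module ℂ Y] [Module ℝ Y] [IsScalarTower ℝ ℂ Y]
    (U : Set X) (V : Set Y)
    (hU : U ∈ nhds (0 : X)) (hUbal : Balanced ℂ U) (hUconv : Convex ℝ U)
    (hVbal : Balanced ℂ V) (hVconv : Convex ℝ V)
    (f : X → Y) (hf0 : f 0 = 0)
    (hf : ∀ u ∈ U, ∀ w : X, ∀ t : ℂ, ‖t‖ ≤ 1 →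
      ∃ s₁ : ℂ, ‖s₁‖ ≤ ‖t‖ ∧ f (t • u + w) = s₁ • f u + f w) :
    ∀ u ∈ U ∩ f ⁻¹' V, ∀ w ∈ U ∩ f ⁻¹' V, ∀ α β : ℂ, ‖α‖ + ‖β‖ ≤ 1 →
      α • u + β • w ∈ U ∩ f ⁻¹' V := by
  intro u hu w hw α β hαβ
  have hα1 : ‖α‖ ≤ 1 := le_trans (le_add_of_nonneg_right (norm_nonneg _)) hαβ
  have hβ1 : ‖β‖ ≤ 1 := le_trans (le_add_of_nonneg_left (norm_nonneg _)) hαβ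
  refine ⟨balconv_mem hUbal hUconv hu.1 hw.1 hαβ, ?_⟩
  obtain ⟨s₂, hs₂, h2⟩ := hf w hw.1 0 β hβ1
  rw [add_zero, hf0, add_zero] at h2
  obtain ⟨s₁, hs₁, h1⟩ := hf u hu.1 (β • w) α hα1
  simp only [Set.mem_preimage]
  rw [h1, h2]
  exact balconv_mem hVbal hVconv hu.2 hw.2 (le_trans (add_le_add hs₁ hs₂) hαβ)
end

section
/- Let X be a topological vector space, U a neighborhood of 0 in X, and f : X → ℂ a map such that for every ξ ∈ X, η ∈ U and |t| ≤ 1 there exists s ∈ ℂ with |s| ≤ |t| and f(ξ + t·η) = f(ξ) + s·f(η). If f is continuous at 0, then f is continuous on all of X. -/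
theorem stmt_2 {X : Type*} [AddCommGroup X] [Module ℂ X] [TopologicalSpace X]
    [IsTopologicalAddGroup X] [ContinuousSMul ℂ X]
    (U : Set X) (hU : U ∈ nhds (0 : X)) (f : X → ℂ)
    (hf : ∀ ξ : X, ∀ η ∈ U, ∀ t : ℂ, ‖t‖ ≤ 1 →
      ∃ s : ℂ, ‖s‖ ≤ ‖t‖ ∧ f (ξ + t • η) = f ξ + s * f η)
    (hcont : ContinuousAt f 0) : Continuous f := by
  rw [continuous_iff_continuousAt]
  intro x
  have key : Filter.Tendsto (fun h => f (x + h)) (nhds 0) (nhds (f x)) := by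
    rw [Metric.tendsto_nhds]
    intro ε hε
    set C : ℝ := ‖f 0‖ + 1 with hC
    have hC0 : 0 < C := by positivity
    set r : ℝ := min 1 (ε / (2 * C)) with hr
    have hr0 : 0 < r := lt_min one_pos (by positivity)
    have hr1 : r ≤ 1 := min_le_left _ _
    set t : ℂ := (r : ℂ) with ht
    have ht0 : t ≠ 0 := by
      simp only [ht, ne_eq, Complex.ofReal_eq_zero]
      exact hr0.ne'
    have htn : ‖t‖ = r := by
      simp [ht, abs_of_pos hr0]
    have hsm : Filter.Tendsto (fun h : X => t⁻¹ • h) (nhds 0) (nhds 0) := by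
      simpa using (continuous_const_smul (t⁻¹ : ℂ)).tendsto (0 : X)
    have hA : ∀ᶠ h in nhds (0 : X), t⁻¹ • h ∈ U := hsm.eventually_mem hU
    have hB : ∀ᶠ h in nhds (0 : X), ‖f (t⁻¹ • h)‖ < C := by
      have h1 : Filter.Tendsto (fun h : X => f (t⁻¹ • h)) (nhds 0) (nhds (f 0)) :=
        hcont.tendsto.comp hsm
      exact h1.norm.eventually_lt_const (by simp [hC])
    filter_upwards [hA, hB] with h hhU hhC
    obtain ⟨s, hs, heq⟩ := hf x (t⁻¹ • h) hhU t (by rw [htn]; exact hr1)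
    rw [smul_inv_smul₀ ht0] at heq
    rw [dist_eq_norm, heq]
    simp only [add_sub_cancel_left]
    have hεhalf : (ε / (2 * C)) * C = ε / 2 := by
      field_simp
    calc ‖s * f (t⁻¹ • h)‖ = ‖s‖ * ‖f (t⁻¹ • h)‖ := norm_mul _ _
      _ ≤ r * C := mul_le_mul (htn ▸ hs) hhC.le (norm_nonneg _) hr0.le
      _ ≤ (ε / (2 * C)) * C := by gcongr; exact min_le_right _ _
      _ = ε / 2 := hεhalf
      _ < ε := by linarith
  have hmap : Filter.Tendsto (fun y : X => y - x) (nhds x) (nhds 0) := by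
    simpa using (continuous_sub_right x).tendsto x
  have := key.comp hmap
  simpa [Function.comp_def, ContinuousAt] using this
end

section
/- Let γ : ℂ → ℂ be continuous at 0 with γ(0) = 0, let ε > 0, and let h : ℂ → ℂ satisfy h(0) = 0 and: for all z ∈ ℂ, w ∈ ℂ with |w| < ε and t ∈ ℂ with |t| ≤ 1 there exist r, s ∈ ℂ with |r − 1| ≤ |γ(t)|, |s| ≤ |γ(t)| and h(z + t·w) = r·h(z) + s·h(w). Then h is continuous on ℂ. -/
theorem stmt_3 (γ : ℂ → ℂ) (hγc : ContinuousAt γ 0) (hγ0 : γ 0 = 0)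
    (ε : ℝ) (hε : 0 < ε) (h : ℂ → ℂ) (h0 : h 0 = 0)
    (hh : ∀ z w : ℂ, ‖w‖ < ε → ∀ t : ℂ, ‖t‖ ≤ 1 →
      ∃ r s : ℂ, ‖r - 1‖ ≤ ‖γ t‖ ∧ ‖s‖ ≤ ‖γ t‖ ∧
        h (z + t * w) = r * h z + s * h w) :
    Continuous h := by
  rw [continuous_iff_continuousAt]
  intro x
  rw [Metric.continuousAt_iff]
  intro e he
  set w : ℂ := (ε : ℂ) / 2 with hw
  have hwnorm : ‖w‖ = ε / 2 := by
    simp [hw, norm_div, Complex.norm_real, abs_of_pos hε]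
  have hwlt : ‖w‖ < ε := by rw [hwnorm]; linarith
  set C : ℝ := ‖h x‖ + ‖h w‖ + 1 with hCdef
  have hC : 0 < C := by positivity
  have hquot : (0:ℝ) < e / (2 * C) := by positivity
  obtain ⟨δ₁, hδ₁pos, hδ₁⟩ := Metric.continuousAt_iff.mp hγc (e / (2 * C)) hquot
  refine ⟨min δ₁ 1 * (ε / 2), by positivity, ?_⟩
  intro x' hx'
  have hwne : w ≠ 0 := by
    simp [hw]
    exact_mod_cast hε.ne'
  set t : ℂ := (x' - x) / w with ht
  have htw : x + t * w = x' := by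
    rw [ht, div_mul_cancel₀ _ hwne]; ring
  have htnorm : ‖t‖ = dist x' x / (ε / 2) := by
    rw [ht, norm_div, hwnorm, dist_eq_norm]
  have htlt : ‖t‖ < min δ₁ 1 := by
    rw [htnorm, div_lt_iff₀ (by positivity)]
    exact hx'
  have ht1 : ‖t‖ ≤ 1 := le_of_lt (lt_of_lt_of_le htlt (min_le_right _ _))
  have hγt : ‖γ t‖ < e / (2 * C) := by
    have := hδ₁ (show dist t 0 < δ₁ by
      simpa [dist_eq_norm] using lt_of_lt_of_le htlt (min_le_left _ _))
    simpa [hγ0, dist_eq_norm] using this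
  obtain ⟨r, s, hr, hs, heq⟩ := hh x w hwlt t ht1
  rw [dist_eq_norm, ← htw, heq]
  have key : r * h x + s * h w - h x = (r - 1) * h x + s * h w := by ring
  rw [key]
  calc ‖(r - 1) * h x + s * h w‖ ≤ ‖(r-1) * h x‖ + ‖s * h w‖ := norm_add_le _ _
    _ = ‖r-1‖ * ‖h x‖ + ‖s‖ * ‖h w‖ := by rw [norm_mul, norm_mul]
    _ ≤ ‖γ t‖ * ‖h x‖ + ‖γ t‖ * ‖h w‖ := by
        gcongr
    _ = ‖γ t‖ * (‖h x‖ + ‖h w‖) := by ring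
    _ ≤ ‖γ t‖ * C := by
        have : ‖h x‖ + ‖h w‖ ≤ C := by rw [hCdef]; linarith
        exact mul_le_mul_of_nonneg_left this (norm_nonneg _)
    _ < e / (2 * C) * C := by
        exact mul_lt_mul_of_pos_right hγt hC
    _ ≤ e := by
        rw [div_mul_eq_mul_div, div_le_iff₀ (by positivity)]
        nlinarith
end

section
/- Let h(z) = e^{|z|} − 1 for z ∈ ℂ. Then for every z, w ∈ ℂ with |w| ≤ 1 and every t ∈ ℂ with |t| ≤ 1, there exist r, s ∈ ℂ with |r − 1| ≤ e²|t| and |s| ≤ e²|t| such that h(z + t·w) = r·h(z) + s·h(w). -/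
lemma exp_sub_one_abs_le (a : ℝ) : |Real.exp a - 1| ≤ |a| * Real.exp |a| := by
  rcases le_or_gt 0 a with h | h
  · have h0 : (0:ℝ) ≤ Real.exp a - 1 := by
      have := Real.one_le_exp h; linarith
    rw [abs_of_nonneg h, abs_of_nonneg h0]
    have h1 : 1 - a ≤ Real.exp (-a) := by
      have := Real.add_one_le_exp (-a); linarith
    have h2 : (1 - a) * Real.exp a ≤ Real.exp (-a) * Real.exp a :=
      mul_le_mul_of_nonneg_right h1 (Real.exp_pos a).le
    rw [← Real.exp_add, neg_add_cancel, Real.exp_zero] at h2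
    nlinarith
  · rw [abs_of_neg h, abs_of_nonpos (by nlinarith [Real.exp_lt_one_iff.mpr h] : Real.exp a - 1 ≤ 0)]
    have h1 := Real.add_one_le_exp a
    have h2 : (1:ℝ) ≤ Real.exp (-a) := Real.one_le_exp_iff.mpr (by linarith)
    nlinarith

theorem stmt_6 (z w t : ℂ) (hw : ‖w‖ ≤ 1) (ht : ‖t‖ ≤ 1) :
    ∃ r s : ℂ, ‖r - 1‖ ≤ Real.exp 2 * ‖t‖ ∧ ‖s‖ ≤ Real.exp 2 * ‖t‖ ∧
      ((Real.exp ‖z + t * w‖ - 1 : ℝ) : ℂ) =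
        r * ((Real.exp ‖z‖ - 1 : ℝ) : ℂ) + s * ((Real.exp ‖w‖ - 1 : ℝ) : ℂ) := by
  by_cases hw0 : w = 0
  · refine ⟨1, 0, by simpa using mul_nonneg (Real.exp_pos 2).le (norm_nonneg t), by
      simpa using mul_nonneg (Real.exp_pos 2).le (norm_nonneg t), ?_⟩
    simp [hw0]
  · set a : ℝ := ‖z + t * w‖ - ‖z‖ with ha
    have habs : |a| ≤ ‖t‖ * ‖w‖ := by
      have := abs_norm_sub_norm_le (z + t * w) z
      simpa [ha, norm_mul] using this
    have hwpos : 0 < ‖w‖ := norm_pos_iff.mpr hw0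
    have hexpw : ‖w‖ ≤ Real.exp ‖w‖ - 1 := by
      have := Real.add_one_le_exp ‖w‖; linarith
    have hexpwpos : 0 < Real.exp ‖w‖ - 1 := lt_of_lt_of_le hwpos hexpw
    have key : |Real.exp a - 1| ≤ Real.exp 1 * (‖t‖ * ‖w‖) := by
      calc |Real.exp a - 1| ≤ |a| * Real.exp |a| := exp_sub_one_abs_le a
        _ ≤ (‖t‖ * ‖w‖) * Real.exp 1 := by
            apply mul_le_mul habs (Real.exp_le_exp.mpr ?_) (Real.exp_pos _).le
              (mul_nonneg (norm_nonneg t) (norm_nonneg w))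
            calc |a| ≤ ‖t‖ * ‖w‖ := habs
              _ ≤ 1 * 1 := mul_le_mul ht hw (norm_nonneg w) zero_le_one
              _ = 1 := one_mul 1
        _ = Real.exp 1 * (‖t‖ * ‖w‖) := mul_comm _ _
    have he12 : Real.exp 1 ≤ Real.exp 2 := Real.exp_le_exp.mpr one_le_two
    refine ⟨((Real.exp a : ℝ) : ℂ), (((Real.exp a - 1) / (Real.exp ‖w‖ - 1) : ℝ) : ℂ), ?_, ?_, ?_⟩
    · have : ‖((Real.exp a : ℝ) : ℂ) - 1‖ = |Real.exp a - 1| := by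
        rw [show ((Real.exp a : ℝ) : ℂ) - 1 = ((Real.exp a - 1 : ℝ) : ℂ) by push_cast; ring]
        exact (Complex.norm_real _).trans (Real.norm_eq_abs _)
      rw [this]
      calc |Real.exp a - 1| ≤ Real.exp 1 * (‖t‖ * ‖w‖) := key
        _ ≤ Real.exp 2 * (‖t‖ * 1) := by
            apply mul_le_mul he12 (mul_le_mul_of_nonneg_left hw (norm_nonneg t))
              (mul_nonneg (norm_nonneg t) (norm_nonneg w)) (Real.exp_pos 2).le
        _ = Real.exp 2 * ‖t‖ := by ring
    · rw [Complex.norm_real, Real.norm_eq_abs, abs_div, abs_of_pos hexpwpos, div_le_iff₀ hexpwpos]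
      calc |Real.exp a - 1| ≤ Real.exp 1 * (‖t‖ * ‖w‖) := key
        _ ≤ Real.exp 2 * (‖t‖ * (Real.exp ‖w‖ - 1)) := by
            apply mul_le_mul he12 (mul_le_mul_of_nonneg_left hexpw (norm_nonneg t))
              (mul_nonneg (norm_nonneg t) (norm_nonneg w)) (Real.exp_pos 2).le
        _ = Real.exp 2 * ‖t‖ * (Real.exp ‖w‖ - 1) := by ring
    · have heq : Real.exp ‖z + t * w‖ = Real.exp a * Real.exp ‖z‖ := by
        rw [← Real.exp_add]; congr 1; rw [ha]; ring
      have hre : Real.exp ‖z + t * w‖ - 1 =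
          Real.exp a * (Real.exp ‖z‖ - 1) +
            ((Real.exp a - 1) / (Real.exp ‖w‖ - 1)) * (Real.exp ‖w‖ - 1) := by
        rw [div_mul_cancel₀ _ hexpwpos.ne', heq]; ring
      exact_mod_cast congrArg (Complex.ofReal) hre
end

section
/- Let γ₁(t) = √|t| on ℂ, so γ₁ is monotone on |t| ≤ 1 with sup_{|t|≤1}|γ₁(t)| = 1. Suppose f : X → ℂ satisfies: for ξ ∈ X, η ∈ V, |t| ≤ 1, f(ξ+tη) = f(ξ) + α f(η) with |α| ≤ γ₁(|t|), and |f(η)| < ε for η ∈ V; and h : ℂ → ℂ satisfies: for z ∈ ℂ, |w| < ε, |u| ≤ 1, h(z + u·w) = r h(z) + s h(w) with |r−1| ≤ γ₁(|u|), |s| ≤ γ₁(|u|). Then for ξ ∈ X, η ∈ V, |t| ≤ 1, there exist r, s with |r−1| ≤ γ₁(γ₁(|t|)) = |t|^{1/4} and |s| ≤ |t|^{1/4} such that (h∘f)(ξ+tη) = r·(h∘f)(ξ) + s·(h∘f)(η). -/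
theorem stmt_9 {X : Type*} [AddCommGroup X] [Module ℂ X]
    (V : Set X) (ε : ℝ) (f : X → ℂ) (h : ℂ → ℂ)
    (hf : ∀ ξ : X, ∀ η ∈ V, ∀ t : ℂ, ‖t‖ ≤ 1 →
      ∃ α : ℂ, ‖α‖ ≤ Real.sqrt ‖t‖ ∧ f (ξ + t • η) = f ξ + α * f η)
    (hfsmall : ∀ η ∈ V, ‖f η‖ < ε)
    (hh : ∀ z w : ℂ, ‖w‖ < ε → ∀ u : ℂ, ‖u‖ ≤ 1 →
      ∃ r s : ℂ, ‖r - 1‖ ≤ Real.sqrt ‖u‖ ∧ ‖s‖ ≤ Real.sqrt ‖u‖ ∧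
        h (z + u * w) = r * h z + s * h w) :
    ∀ ξ : X, ∀ η ∈ V, ∀ t : ℂ, ‖t‖ ≤ 1 →
      ∃ r s : ℂ, ‖r - 1‖ ≤ Real.sqrt (Real.sqrt ‖t‖) ∧
        ‖s‖ ≤ Real.sqrt (Real.sqrt ‖t‖) ∧
        (h ∘ f) (ξ + t • η) = r * (h ∘ f) ξ + s * (h ∘ f) η := by
  intro ξ η hη t ht
  obtain ⟨α, hα, hfe⟩ := hf ξ η hη t ht
  have hα1 : ‖α‖ ≤ 1 := hα.trans (by
    nlinarith [Real.sq_sqrt (norm_nonneg t), Real.sqrt_nonneg ‖t‖])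
  obtain ⟨r, s, hr, hs, hhe⟩ := hh (f ξ) (f η) (hfsmall η hη) α hα1
  have hmono : Real.sqrt ‖α‖ ≤ Real.sqrt (Real.sqrt ‖t‖) := Real.sqrt_le_sqrt hα
  exact ⟨r, s, hr.trans hmono, hs.trans hmono, by simp [Function.comp, hfe, hhe]⟩
end

section
/- Let X be a set closed under the operations used, U ⊆ X, γ : ℂ → ℂ continuous at 0 with γ(0)=0. Suppose f_k : X → ℂ (k ∈ ℕ) each satisfy the demi-linear splitting: for ξ ∈ X, η ∈ U, |t| ≤ 1 there exist r_k, s_k ∈ ℂ with |r_k − 1| ≤ |γ(t)|, |s_k| ≤ |γ(t)| and f_k(ξ + tη) = r_k f_k(ξ) + s_k f_k(η). If f(ξ) = lim_k f_k(ξ) exists for every ξ ∈ X, then f also satisfies the same splitting: for every ξ ∈ X, η ∈ U, |t| ≤ 1 there exist r, s with |r−1| ≤ |γ(t)|, |s| ≤ |γ(t)| and f(ξ + tη) = r·f(ξ) + s·f(η). -/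
theorem stmt_17 {X : Type*} [AddCommGroup X] [Module ℂ X]
    (U : Set X) (γ : ℂ → ℂ) (hγc : ContinuousAt γ 0) (hγ0 : γ 0 = 0)
    (fk : ℕ → X → ℂ)
    (hfk : ∀ k : ℕ, ∀ ξ : X, ∀ η ∈ U, ∀ t : ℂ, ‖t‖ ≤ 1 →
      ∃ r s : ℂ, ‖r - 1‖ ≤ ‖γ t‖ ∧ ‖s‖ ≤ ‖γ t‖ ∧
        fk k (ξ + t • η) = r * fk k ξ + s * fk k η)
    (f : X → ℂ)
    (hlim : ∀ ξ : X, Filter.Tendsto (fun k => fk k ξ) Filter.atTop (nhds (f ξ))) :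
    ∀ ξ : X, ∀ η ∈ U, ∀ t : ℂ, ‖t‖ ≤ 1 →
      ∃ r s : ℂ, ‖r - 1‖ ≤ ‖γ t‖ ∧ ‖s‖ ≤ ‖γ t‖ ∧
        f (ξ + t • η) = r * f ξ + s * f η := by
  intro ξ η hη t ht
  choose r s hr hs heq using fun k => hfk k ξ η hη t ht
  set K : Set (ℂ × ℂ) :=
    (Metric.closedBall (1 : ℂ) ‖γ t‖) ×ˢ (Metric.closedBall (0 : ℂ) ‖γ t‖) with hK
  have hKc : IsCompact K :=
    (isCompact_closedBall _ _).prod (isCompact_closedBall _ _)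
  have hmem : ∀ k, (r k, s k) ∈ K := by
    intro k
    refine ⟨?_, ?_⟩
    · simpa [Metric.mem_closedBall, dist_eq_norm] using hr k
    · simpa [Metric.mem_closedBall, dist_eq_norm] using hs k
  obtain ⟨⟨a, b⟩, hab, φ, hφ, htend⟩ := hKc.tendsto_subseq hmem
  refine ⟨a, b, ?_, ?_, ?_⟩
  · simpa [Metric.mem_closedBall, dist_eq_norm] using hab.1
  · simpa [Metric.mem_closedBall, dist_eq_norm] using hab.2
  · have h1 : Filter.Tendsto (fun j => fk (φ j) (ξ + t • η)) Filter.atTop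
        (nhds (f (ξ + t • η))) := (hlim _).comp hφ.tendsto_atTop
    have ha : Filter.Tendsto (fun j => r (φ j)) Filter.atTop (nhds a) :=
      (continuous_fst.tendsto _).comp htend
    have hb : Filter.Tendsto (fun j => s (φ j)) Filter.atTop (nhds b) :=
      (continuous_snd.tendsto _).comp htend
    have h2 : Filter.Tendsto (fun j => fk (φ j) (ξ + t • η)) Filter.atTop
        (nhds (a * f ξ + b * f η)) := by
      have := (ha.mul ((hlim ξ).comp hφ.tendsto_atTop)).add
        (hb.mul ((hlim η).comp hφ.tendsto_atTop))
      simpa [heq] using this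
    exact tendsto_nhds_unique h1 h2
end
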